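/- arXiv:2109.15243 — 2 statements merged into one kernel-verified Lean document; each statement's English description precedes it below -/
import Mathlib

section
/- For every positive integer n such that t_n ≠ t_{n-1}, we have h_{4n} = t_n · h_{4n-3}. -/
def t (n : ℕ) : ℤ := (-1) ^ ((Nat.digits 2 n).sum)

def h : ℕ → ℤ
  | 0 => 0
  | 1 => 1
  | (n + 2) => t (n + 2) * h (n + 1) + h n

/-
Expanding the recursion twice, h (4n) = t (4n) t (4n-1) h (4n-2) + t (4n) h (4n-3) + h (4n-2).
Since t (4n) = t n and t (4n-1) = t (n-1) = -t n, the product t (4n) t (4n-1) is -1 and the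
h (4n-2) terms cancel.
-/

lemma h_add_two (m : ℕ) : h (m + 2) = t (m + 2) * h (m + 1) + h m := rfl

lemma t_two_mul (m : ℕ) : t (2 * m) = t m := by
  rcases Nat.eq_zero_or_pos m with rfl | hm
  · rfl
  · unfold t
    rw [Nat.digits_def' (by norm_num : 1 < 2) (by omega)]
    simp

lemma t_two_mul_add_one (m : ℕ) : t (2 * m + 1) = -t m := by
  unfold t
  rw [Nat.digits_def' (by norm_num : 1 < 2) (by omega),
    show (2 * m + 1) % 2 = 1 by omega, show (2 * m + 1) / 2 = m by omega,
    List.sum_cons, pow_add, pow_one, neg_one_mul]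

lemma t_four_mul (m : ℕ) : t (4 * m) = t m := by
  rw [show 4 * m = 2 * (2 * m) by ring, t_two_mul, t_two_mul]

lemma t_four_mul_add_three (m : ℕ) : t (4 * m + 3) = t m := by
  rw [show 4 * m + 3 = 2 * (2 * m + 1) + 1 by ring, t_two_mul_add_one, t_two_mul_add_one, neg_neg]

lemma t_eq_one_or_eq_neg_one (m : ℕ) : t m = 1 ∨ t m = -1 := neg_one_pow_eq_or ℤ _

lemma t_mul_self (m : ℕ) : t m * t m = 1 := by
  rcases t_eq_one_or_eq_neg_one m with hm | hm <;> rw [hm] <;> norm_num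

lemma t_eq_neg_of_ne {a b : ℕ} (hab : t a ≠ t b) : t a = -t b := by
  rcases t_eq_one_or_eq_neg_one a with ha | ha <;>
    rcases t_eq_one_or_eq_neg_one b with hb | hb <;> simp_all

lemma h_add_three_of_t_add_three_eq_neg {m : ℕ} (ht : t (m + 3) = -t (m + 2)) :
    h (m + 3) = t (m + 3) * h m := by
  linear_combination h_add_two (m + 1) + t (m + 3) * h_add_two m
    + t (m + 3) * h (m + 1) * ht - h (m + 1) * t_mul_self (m + 3)

theorem stmt1 : ∀ n : ℕ, 0 < n → t n ≠ t (n - 1) → h (4 * n) = t n * h (4 * n - 3) := by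
  rintro n hn hne
  obtain ⟨k, rfl⟩ := Nat.exists_eq_add_one.mpr hn
  rw [Nat.add_sub_cancel] at hne
  have ht : t (4 * k + 1 + 3) = -t (4 * k + 1 + 2) := by
    rw [show 4 * k + 1 + 3 = 4 * (k + 1) by ring, show 4 * k + 1 + 2 = 4 * k + 3 by ring,
      t_four_mul, t_four_mul_add_three]
    exact t_eq_neg_of_ne hne
  rw [show 4 * (k + 1) - 3 = 4 * k + 1 by omega, show 4 * (k + 1) = 4 * k + 1 + 3 by ring,
    h_add_three_of_t_add_three_eq_neg ht, show 4 * k + 1 + 3 = 4 * (k + 1) by ring, t_four_mul]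
end

section
/- For each integer m ≥ 2, there are infinitely many positive integers n such that m divides h_n. -/
theorem t_two_pow_add {k i : ℕ} (hi : i < 2 ^ k) : t (2 ^ k + i) = -t i := by
  have hlen : (Nat.digits 2 i).length ≤ k := (Nat.digits_length_le_iff one_lt_two i).mpr hi
  have hdigits : Nat.digits 2 (2 ^ k + i) =
      Nat.digits 2 i ++ List.replicate (k - (Nat.digits 2 i).length) 0 ++ Nat.digits 2 1 := by
    rw [Nat.digits_append_zeroes_append_digits one_lt_two one_pos,
      Nat.add_sub_cancel' hlen, mul_one, add_comm]
  rw [t, t, hdigits]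
  simp [pow_succ]

section Transfer

variable (R : Type*) [CommRing R]

def transfer (j : ℕ) : Matrix (Fin 2) (Fin 2) R := !![0, 1; 1, (t j : R)]

def transferProd : ℕ → Matrix (Fin 2) (Fin 2) R
  | 0 => 1
  | n + 1 => transfer R (n + 1) * transferProd n

def signDiag : Matrix (Fin 2) (Fin 2) R := !![1, 0; 0, -1]

variable {R}

theorem signDiag_mul_self : signDiag R * signDiag R = 1 := by
  simp [signDiag, Matrix.one_fin_two]

theorem signDiag_mul_signDiag_mul (A : Matrix (Fin 2) (Fin 2) R) :
    signDiag R * (signDiag R * A) = A := by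
  rw [← mul_assoc, signDiag_mul_self, one_mul]

theorem det_signDiag : (signDiag R).det = -1 := by
  simp [signDiag]

theorem transferProd_succ_apply_zero (n : ℕ) :
    transferProd R (n + 1) 0 0 = h n ∧ transferProd R (n + 1) 1 0 = h (n + 1) := by
  induction n with
  | zero => simp [transferProd, transfer, h]
  | succ n ih =>
    rw [transferProd]
    simp [transfer, Matrix.mul_apply, ih.1, ih.2, h, add_comm (h n : R)]

theorem transferProd_apply_one_zero (n : ℕ) : transferProd R n 1 0 = h n := by
  cases n with
  | zero => simp [transferProd, h]
  | succ n => exact (transferProd_succ_apply_zero n).2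

theorem det_transferProd (n : ℕ) : (transferProd R n).det = (-1) ^ n := by
  induction n with
  | zero => simp [transferProd]
  | succ n ih =>
    rw [transferProd, Matrix.det_mul, ih]
    simp [transfer, pow_succ']

theorem transfer_two_pow_add {k i : ℕ} (hi : i < 2 ^ k) :
    transfer R (2 ^ k + i) = -(signDiag R * transfer R i * signDiag R) := by
  ext a b
  fin_cases a <;> fin_cases b <;> simp [transfer, signDiag, t_two_pow_add hi]

theorem transferProd_two_pow_add {k r : ℕ} (hr : r < 2 ^ k) :
    transferProd R (2 ^ k + r) =
      (-1 : R) ^ r • (signDiag R * transferProd R r * signDiag R * transferProd R (2 ^ k)) := by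
  induction r with
  | zero => simp [transferProd, signDiag_mul_self]
  | succ r ih =>
    rw [← add_assoc, transferProd, ih (by omega), add_assoc, transfer_two_pow_add hr,
      transferProd]
    simp only [neg_mul, mul_smul_comm, smul_neg, pow_succ, mul_neg, mul_one, neg_smul, mul_assoc,
      signDiag_mul_signDiag_mul]

end Transfer

section Recurrence

variable {R : Type*} [CommRing R] {X : Matrix (Fin 2) (Fin 2) R}

theorem exists_gt_transferProd_eq_smul (hX : {k | transferProd R (2 ^ k) = X}.Infinite)
    {n : ℕ} {ε : R} {Y : Matrix (Fin 2) (Fin 2) R} (hn : transferProd R n = ε • Y) (B : ℕ) :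
    ∃ n' > B, ∃ ε' : R, transferProd R n' = ε' • (signDiag R * Y * signDiag R * X) := by
  obtain ⟨k, hk, hnBk⟩ := hX.exists_gt (max n B)
  have hnB : max n B < 2 ^ k := hnBk.trans k.lt_two_pow_self
  refine ⟨2 ^ k + n, by omega, (-1) ^ n * ε, ?_⟩
  rw [transferProd_two_pow_add (by omega), hn, hk]
  simp only [mul_smul_comm, Matrix.smul_mul, smul_smul]

theorem exists_gt_transferProd_eq_smul_pow (hX : {k | transferProd R (2 ^ k) = X}.Infinite)
    (c B : ℕ) : ∃ n > B, ∃ ε : R,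
      transferProd R n = ε • (signDiag R ^ (c + 1) * (signDiag R * X) ^ (c + 1)) := by
  induction c generalizing B with
  | zero =>
    simpa [mul_assoc] using
      exists_gt_transferProd_eq_smul hX (n := 0) (ε := 1) (Y := 1) (by simp [transferProd]) B
  | succ c ih =>
    obtain ⟨n, -, ε, hn⟩ := ih 0
    obtain ⟨n', hn'B, ε', hn'⟩ := exists_gt_transferProd_eq_smul hX hn B
    refine ⟨n', hn'B, ε', ?_⟩
    rw [hn', pow_succ' (signDiag R) (c + 1), pow_succ (signDiag R * X) (c + 1)]
    simp only [mul_assoc]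

end Recurrence

theorem infinite_setOf_h_cast_eq_zero (R : Type*) [CommRing R] [Finite R] :
    {n | 0 < n ∧ (h n : R) = 0}.Infinite := by
  obtain ⟨X, hfiber⟩ := Finite.exists_infinite_fiber fun k => transferProd R (2 ^ k)
  have hX : {k | transferProd R (2 ^ k) = X}.Infinite := Set.infinite_coe_iff.mp hfiber
  obtain ⟨k, hk⟩ := hX.nonempty
  have hW : IsUnit (signDiag R * X) := by
    rw [Matrix.isUnit_iff_isUnit_det, Matrix.det_mul, det_signDiag, ← hk.out, det_transferProd]
    exact isUnit_one.neg.mul (isUnit_one.neg.pow _)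
  obtain ⟨o, ho, hu⟩ := isOfFinOrder_iff_pow_eq_one.mp (isOfFinOrder_of_finite hW.unit)
  have hWo : (signDiag R * X) ^ o = 1 := by simpa using congrArg Units.val hu
  apply Set.infinite_of_forall_exists_gt
  intro B
  obtain ⟨n, hnB, ε, hn⟩ := exists_gt_transferProd_eq_smul_pow hX (2 * o - 1) B
  rw [Nat.sub_add_cancel (by omega), pow_mul, sq, signDiag_mul_self, one_pow, mul_comm, pow_mul,
    hWo, one_pow, one_mul] at hn
  refine ⟨n, ⟨by omega, ?_⟩, hnB⟩
  rw [← transferProd_apply_one_zero, hn]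
  simp

theorem stmt15 : ∀ m : ℕ, 2 ≤ m → {n : ℕ | 0 < n ∧ (m : ℤ) ∣ h n}.Infinite := by
  intro m hm
  have : NeZero m := ⟨by omega⟩
  simpa only [ZMod.intCast_zmod_eq_zero_iff_dvd] using infinite_setOf_h_cast_eq_zero (ZMod m)
end
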